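/- Let T and X be A-bounded operators on H admitting A-adjoints (i.e. there exist Ts, Xs with A∘Ts = T*∘A and A∘Xs = X*∘A). Then w_𝔸([[T,X],[0,0]]) ≤ w_A(T) + (1/2)·‖X‖_A. -/

import Mathlib

noncomputable def sInner {E : Type*} [NormedAddCommGroup E] [InnerProductSpace ℂ E]
    (A : E →L[ℂ] E) (x y : E) : ℂ := inner ℂ (A x) y

noncomputable def sNorm {E : Type*} [NormedAddCommGroup E] [InnerProductSpace ℂ E]
    (A : E →L[ℂ] E) (x : E) : ℝ := Real.sqrt (sInner A x x).re

/-- The `A`-operator seminorm. -/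
noncomputable def opSNorm {E : Type*} [NormedAddCommGroup E] [InnerProductSpace ℂ E]
    (A T : E →L[ℂ] E) : ℝ := sSup {c | ∃ x : E, sNorm A x = 1 ∧ c = sNorm A (T x)}

/-- The `A`-numerical radius. -/
noncomputable def numRad {E : Type*} [NormedAddCommGroup E] [InnerProductSpace ℂ E]
    (A T : E →L[ℂ] E) : ℝ := sSup {c | ∃ x : E, sNorm A x = 1 ∧ c = ‖sInner A (T x) x‖}

/-- `T` is `A`-bounded. -/
def ABounded {E : Type*} [NormedAddCommGroup E] [InnerProductSpace ℂ E]
    (A T : E →L[ℂ] E) : Prop := ∃ c > 0, ∀ x : E, sNorm A (T x) ≤ c * sNorm A x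

/-- The 2×2 block operator `[[T, X], [Y, S]]` on `H ⊕ H` (with the ℓ² product structure). -/
noncomputable def blk {H : Type*} [NormedAddCommGroup H] [InnerProductSpace ℂ H]
    (T X Y S : H →L[ℂ] H) : WithLp 2 (H × H) →L[ℂ] WithLp 2 (H × H) :=
  ((WithLp.prodContinuousLinearEquiv 2 ℂ H H).symm.toContinuousLinearMap.comp
    (((T.coprod X).prod (Y.coprod S)).comp
      (WithLp.prodContinuousLinearEquiv 2 ℂ H H).toContinuousLinearMap))

/-- The diagonal operator `𝔸 = diag(A, A)` on `H ⊕ H`. -/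
noncomputable def twoA {H : Type*} [NormedAddCommGroup H] [InnerProductSpace ℂ H]
    (A : H →L[ℂ] H) : WithLp 2 (H × H) →L[ℂ] WithLp 2 (H × H) := blk A 0 0 A

/-! Write `u = (x, y)` with `a = ‖x‖_A`, `b = ‖y‖_A`, so that `‖u‖_𝔸 = 1` means `a² + b² = 1`.
Then `⟨[[T, X], [0, 0]] u, u⟩_𝔸 = ⟨T x, x⟩_A + ⟨X y, x⟩_A`, whose modulus is at most
`w_A(T) a² + ‖X‖_A a b` by Cauchy–Schwarz for the semi-inner product, and `a² ≤ 1`, `a b ≤ 1/2`.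
Cauchy–Schwarz is obtained by writing `⟨x, y⟩_A = ⟨A^{1/2} x, A^{1/2} y⟩`. -/

open ContinuousLinearMap

section SemiInner

variable {H : Type*} [NormedAddCommGroup H] [InnerProductSpace ℂ H]

lemma sNorm_nonneg (A : H →L[ℂ] H) (x : H) : 0 ≤ sNorm A x :=
  Real.sqrt_nonneg _

lemma sNorm_smul (A : H →L[ℂ] H) (c : ℂ) (x : H) : sNorm A (c • x) = ‖c‖ * sNorm A x := by
  have hre : (sInner A (c • x) (c • x)).re = ‖c‖ ^ 2 * (sInner A x x).re := by
    rw [sInner, map_smul, inner_smul_left, inner_smul_right, ← mul_assoc,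
      Complex.conj_mul', ← sInner]
    exact_mod_cast Complex.re_ofReal_mul _ _
  rw [sNorm, sNorm, hre, Real.sqrt_mul (sq_nonneg _), Real.sqrt_sq (norm_nonneg _)]

lemma re_sInner_self {A : H →L[ℂ] H} (hA : A.IsPositive) (x : H) :
    (sInner A x x).re = sNorm A x ^ 2 :=
  (Real.sq_sqrt (hA.re_inner_nonneg_left x)).symm

lemma sInner_eq_inner_sqrt [CompleteSpace H] {A : H →L[ℂ] H} (hA : A.IsPositive) (x y : H) :
    sInner A x y = inner ℂ (CFC.sqrt A x) (CFC.sqrt A y) := by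
  have hA' : 0 ≤ A := (nonneg_iff_isPositive A).2 hA
  have hsa : IsSelfAdjoint (CFC.sqrt A) := IsSelfAdjoint.of_nonneg (CFC.sqrt_nonneg A)
  calc sInner A x y = inner ℂ ((CFC.sqrt A * CFC.sqrt A) x) y := by
        rw [CFC.sqrt_mul_sqrt_self A hA', sInner]
    _ = inner ℂ (adjoint (CFC.sqrt A) (CFC.sqrt A x)) y := by rw [hsa.adjoint_eq]; rfl
    _ = inner ℂ (CFC.sqrt A x) (CFC.sqrt A y) := adjoint_inner_left _ _ _

lemma sNorm_eq_norm_sqrt [CompleteSpace H] {A : H →L[ℂ] H} (hA : A.IsPositive) (x : H) :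
    sNorm A x = ‖CFC.sqrt A x‖ := by
  rw [sNorm, sInner_eq_inner_sqrt hA, ← RCLike.re_to_complex, inner_self_eq_norm_sq,
    Real.sqrt_sq (norm_nonneg _)]

lemma norm_sInner_le [CompleteSpace H] {A : H →L[ℂ] H} (hA : A.IsPositive) (x y : H) :
    ‖sInner A x y‖ ≤ sNorm A x * sNorm A y := by
  rw [sInner_eq_inner_sqrt hA, sNorm_eq_norm_sqrt hA, sNorm_eq_norm_sqrt hA]
  exact norm_inner_le_norm _ _

lemma le_mul_sNorm_pow_of_unit {A : H →L[ℂ] H} {f : H → ℝ} {M : ℝ} {k : ℕ} (hk : k ≠ 0)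
    (hf : ∀ (c : ℂ) (x : H), f (c • x) = ‖c‖ ^ k * f x)
    (hunit : ∀ x, sNorm A x = 1 → f x ≤ M) (hnull : ∀ x, sNorm A x = 0 → f x ≤ 0) (x : H) :
    f x ≤ M * sNorm A x ^ k := by
  rcases (sNorm_nonneg A x).eq_or_lt with h0 | hpos
  · rw [← h0, zero_pow hk, mul_zero]
    exact hnull x h0.symm
  set t := sNorm A x
  have hnorm : ‖((t : ℂ))⁻¹‖ = t⁻¹ := by
    rw [norm_inv, Complex.norm_real, Real.norm_of_nonneg hpos.le]
  have hle := hunit (((t : ℂ))⁻¹ • x) (by rw [sNorm_smul, hnorm, inv_mul_cancel₀ hpos.ne'])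
  rw [hf, hnorm, inv_pow, inv_mul_le_iff₀ (pow_pos hpos k)] at hle
  linarith

end SemiInner

section Radius

variable {H : Type*} [NormedAddCommGroup H] [InnerProductSpace ℂ H] {A T : H →L[ℂ] H}

lemma numRad_nonneg (A T : H →L[ℂ] H) : 0 ≤ numRad A T :=
  Real.sSup_nonneg (by rintro _ ⟨x, -, rfl⟩; exact norm_nonneg _)

lemma opSNorm_nonneg (A T : H →L[ℂ] H) : 0 ≤ opSNorm A T :=
  Real.sSup_nonneg (by rintro _ ⟨x, -, rfl⟩; exact sNorm_nonneg _ _)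

lemma sNorm_le_opSNorm_mul (hT : ABounded A T) (x : H) :
    sNorm A (T x) ≤ opSNorm A T * sNorm A x := by
  obtain ⟨c, -, hc⟩ := hT
  have hbdd : BddAbove {r | ∃ x : H, sNorm A x = 1 ∧ r = sNorm A (T x)} :=
    ⟨c, by rintro _ ⟨x, hx, rfl⟩; simpa [hx] using hc x⟩
  have h := le_mul_sNorm_pow_of_unit (f := fun x => sNorm A (T x)) one_ne_zero
    (fun c x => by simp [sNorm_smul]) (fun x hx => le_csSup hbdd ⟨x, hx, rfl⟩)
    (fun x hx => by simpa [hx] using hc x) x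
  rwa [pow_one] at h

lemma norm_sInner_le_numRad_mul [CompleteSpace H] (hA : A.IsPositive) (hT : ABounded A T)
    (x : H) : ‖sInner A (T x) x‖ ≤ numRad A T * sNorm A x ^ 2 := by
  obtain ⟨c, -, hc⟩ := hT
  have hCS (x : H) : ‖sInner A (T x) x‖ ≤ c * sNorm A x * sNorm A x :=
    (norm_sInner_le hA _ _).trans (mul_le_mul_of_nonneg_right (hc x) (sNorm_nonneg _ _))
  have hbdd : BddAbove {r | ∃ x : H, sNorm A x = 1 ∧ r = ‖sInner A (T x) x‖} :=
    ⟨c, by rintro _ ⟨x, hx, rfl⟩; simpa [hx] using hCS x⟩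
  refine le_mul_sNorm_pow_of_unit (f := fun x => ‖sInner A (T x) x‖) two_ne_zero
    (fun c x => ?_) (fun x hx => le_csSup hbdd ⟨x, hx, rfl⟩)
    (fun x hx => by simpa [hx] using hCS x) x
  rw [map_smul, sInner, map_smul, inner_smul_left, inner_smul_right, norm_mul, norm_mul,
    RCLike.norm_conj, ← sInner]
  ring

end Radius

section Block

variable {H : Type*} [NormedAddCommGroup H] [InnerProductSpace ℂ H]

lemma sInner_twoA (A : H →L[ℂ] H) (u v : WithLp 2 (H × H)) :
    sInner (twoA A) u v = sInner A u.ofLp.1 v.ofLp.1 + sInner A u.ofLp.2 v.ofLp.2 := by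
  have h : sInner (twoA A) u v
      = inner ℂ (A u.ofLp.1 + (0 : H →L[ℂ] H) u.ofLp.2) v.ofLp.1
        + inner ℂ ((0 : H →L[ℂ] H) u.ofLp.1 + A u.ofLp.2) v.ofLp.2 := rfl
  rw [h]
  simp [sInner]

lemma sNorm_twoA_sq {A : H →L[ℂ] H} (hA : A.IsPositive) (u : WithLp 2 (H × H)) :
    sNorm (twoA A) u ^ 2 = sNorm A u.ofLp.1 ^ 2 + sNorm A u.ofLp.2 ^ 2 := by
  have hre : (sInner (twoA A) u u).re = sNorm A u.ofLp.1 ^ 2 + sNorm A u.ofLp.2 ^ 2 := by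
    rw [sInner_twoA, Complex.add_re, re_sInner_self hA, re_sInner_self hA]
  rw [sNorm, hre, Real.sq_sqrt (by positivity)]

lemma sInner_twoA_blk_zero_zero (A T X : H →L[ℂ] H) (u : WithLp 2 (H × H)) :
    sInner (twoA A) (blk T X 0 0 u) u
      = sInner A (T u.ofLp.1) u.ofLp.1 + sInner A (X u.ofLp.2) u.ofLp.1 := by
  have hfst : (blk T X 0 0 u).ofLp.1 = T u.ofLp.1 + X u.ofLp.2 := rfl
  have hsnd : (blk T X 0 0 u).ofLp.2 = 0 := by simp [blk]
  rw [sInner_twoA, hfst, hsnd]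
  simp only [sInner, map_add, map_zero, inner_add_left, inner_zero_left, add_zero]

end Block

theorem stmt6_general {H : Type*} [NormedAddCommGroup H] [InnerProductSpace ℂ H] [CompleteSpace H]
    (A : H →L[ℂ] H) (hA : A.IsPositive)
    (T X : H →L[ℂ] H) (hT : ABounded A T) (hX : ABounded A X) :
    numRad (twoA A) (blk T X 0 0) ≤ numRad A T + (1 / 2) * opSNorm A X := by
  have hw := numRad_nonneg A T
  have hN := opSNorm_nonneg A X
  refine Real.sSup_le ?_ (by positivity)
  rintro _ ⟨u, hu, rfl⟩
  set x := u.ofLp.1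
  set y := u.ofLp.2
  have ha := sNorm_nonneg A x
  have hb := sNorm_nonneg A y
  have hunit : sNorm A x ^ 2 + sNorm A y ^ 2 = 1 := by rw [← sNorm_twoA_sq hA, hu, one_pow]
  calc ‖sInner (twoA A) (blk T X 0 0 u) u‖
      ≤ ‖sInner A (T x) x‖ + ‖sInner A (X y) x‖ := by
        rw [sInner_twoA_blk_zero_zero]; exact norm_add_le _ _
    _ ≤ numRad A T * sNorm A x ^ 2 + opSNorm A X * sNorm A y * sNorm A x :=
        add_le_add (norm_sInner_le_numRad_mul hA hT x) ((norm_sInner_le hA _ _).trans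
          (mul_le_mul_of_nonneg_right (sNorm_le_opSNorm_mul hX y) ha))
    _ ≤ numRad A T + (1 / 2) * opSNorm A X := by
        nlinarith [sq_nonneg (sNorm A x - sNorm A y)]

theorem stmt6 {H : Type*} [NormedAddCommGroup H] [InnerProductSpace ℂ H] [CompleteSpace H]
    (A : H →L[ℂ] H) (hA : A.IsPositive)
    (T X : H →L[ℂ] H) (hT : ABounded A T) (hX : ABounded A X)
    (hTadm : ∃ Ts : H →L[ℂ] H, A.comp Ts = (ContinuousLinearMap.adjoint T).comp A)
    (hXadm : ∃ Xs : H →L[ℂ] H, A.comp Xs = (ContinuousLinearMap.adjoint X).comp A) :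
    numRad (twoA A) (blk T X 0 0) ≤ numRad A T + (1 / 2) * opSNorm A X :=
  stmt6_general A hA T X hT hX
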